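/- arXiv:2209.03730 — 2 statements merged into one kernel-verified Lean document; each statement's English description precedes it below -/
import Mathlib

section
/- Let n ≥ 1 and let v₁, v₂ be binary vectors of length n with m(v₂) ≥ m(v₁). If x₁ and x₂ are positive integers whose parity vectors of length n equal v₁ and v₂ respectively, then 2^n divides the integer 3^{m(v₂)−m(v₁)}·x₂·P(v₁) − x₁·P(v₂). (Paper's Theorem 4.8.) -/
/-- The Collatz map `T`. -/
def collatzT (N : ℕ) : ℕ := if N % 2 = 0 then N / 2 else (3 * N + 1) / 2

/-- The parity vector of length `n` of `N`: entry `k` is `true` iff `T^[k] N` is odd. -/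
def parityVec (N n : ℕ) : List Bool :=
  (List.range n).map (fun k => decide ((collatzT^[k] N) % 2 = 1))

/-- `m(v)`: the number of ones of a binary vector. -/
def mOnes (v : List Bool) : ℕ := v.count true

/-- `P(v)`: the characteristic number of a binary vector,
`P(v) = Σ_{k=1}^{m} 3^(m-k) * 2^(j_k - 1)` where `j_1 < … < j_m` are the positions of ones. -/
def Pchar : List Bool → ℕ
  | [] => 0
  | e :: rest => (if e then 3 ^ mOnes rest else 0) + 2 * Pchar rest
/-!
Unrolling `n` steps of `T` gives `2^n T^n(x) = 3^m(v) x + P(v)` for the parity vector `v` of `x`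
of length `n`, so `P(v) ≡ -3^m(v) x (mod 2^n)`. Substituting this for `v₁` and `v₂`, both terms
of the difference become `-3^m(v₂) x₁ x₂` modulo `2^n`.
-/

@[simp]
lemma mOnes_cons_false (v : List Bool) : mOnes (false :: v) = mOnes v := by
  simp [mOnes]

@[simp]
lemma mOnes_cons_true (v : List Bool) : mOnes (true :: v) = mOnes v + 1 :=
  List.count_cons_self

lemma parityVec_succ (x n : ℕ) :
    parityVec x (n + 1) = decide (x % 2 = 1) :: parityVec (collatzT x) n := by
  simp only [parityVec, List.range_succ_eq_map, List.map_cons, List.map_map]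
  rfl

lemma two_mul_collatzT_of_even {x : ℕ} (h : x % 2 = 0) : 2 * collatzT x = x := by
  rw [collatzT, if_pos h]
  omega

lemma two_mul_collatzT_of_odd {x : ℕ} (h : x % 2 = 1) : 2 * collatzT x = 3 * x + 1 := by
  rw [collatzT, if_neg (by omega)]
  omega

theorem two_pow_mul_iterate_collatzT (n x : ℕ) :
    2 ^ n * collatzT^[n] x = 3 ^ mOnes (parityVec x n) * x + Pchar (parityVec x n) := by
  induction n generalizing x with
  | zero => simp [parityVec, mOnes, Pchar]
  | succ n ih =>
    rw [parityVec_succ, Function.iterate_succ_apply, pow_succ', mul_assoc, ih]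
    rcases Nat.mod_two_eq_zero_or_one x with h | h
    · simp only [h, zero_ne_one, decide_false, Pchar, mOnes_cons_false, Bool.false_eq_true,
        if_false]
      linear_combination 3 ^ mOnes (parityVec (collatzT x) n) * two_mul_collatzT_of_even h
    · simp only [h, decide_true, Pchar, mOnes_cons_true, if_true]
      linear_combination 3 ^ mOnes (parityVec (collatzT x) n) * two_mul_collatzT_of_odd h

theorem Pchar_parityVec_modEq (n x : ℕ) :
    (Pchar (parityVec x n) : ℤ) ≡ -(3 ^ mOnes (parityVec x n) * x) [ZMOD 2 ^ n] := by
  have h := congrArg (Nat.cast : ℕ → ℤ) (two_pow_mul_iterate_collatzT n x)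
  push_cast at h
  exact Int.modEq_iff_dvd.2 ⟨-(collatzT^[n] x : ℤ), by linear_combination h⟩

theorem stmt_11_general (n : ℕ) (v₁ v₂ : List Bool)
    (hm : mOnes v₁ ≤ mOnes v₂)
    (x₁ x₂ : ℕ)
    (hp₁ : parityVec x₁ n = v₁) (hp₂ : parityVec x₂ n = v₂) :
    (2 : ℤ) ^ n ∣
      (3 : ℤ) ^ (mOnes v₂ - mOnes v₁) * x₂ * Pchar v₁ - (x₁ : ℤ) * Pchar v₂ := by
  have h₁ := Pchar_parityVec_modEq n x₁
  have h₂ := Pchar_parityVec_modEq n x₂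
  rw [hp₁] at h₁
  rw [hp₂] at h₂
  have hpow : (3 : ℤ) ^ (mOnes v₂ - mOnes v₁) * 3 ^ mOnes v₁ = 3 ^ mOnes v₂ := by
    rw [← pow_add, Nat.sub_add_cancel hm]
  have hdiff := (h₁.mul_left ((3 : ℤ) ^ (mOnes v₂ - mOnes v₁) * x₂)).sub (h₂.mul_left (x₁ : ℤ))
  rw [show (3 : ℤ) ^ (mOnes v₂ - mOnes v₁) * x₂ * -(3 ^ mOnes v₁ * x₁) - x₁ * -(3 ^ mOnes v₂ * x₂)
      = 0 by linear_combination -(x₁ : ℤ) * x₂ * hpow] at hdiff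
  exact Int.modEq_zero_iff_dvd.mp hdiff

/-- Paper's Theorem 4.8: if v₁, v₂ have the same length n with m(v₂) ≥ m(v₁),
and x₁, x₂ realize them as parity vectors, then
`2^n ∣ 3^(m v₂ - m v₁) * x₂ * P v₁ - x₁ * P v₂` in ℤ. -/
theorem stmt_11 (n : ℕ) (hn : 1 ≤ n) (v₁ v₂ : List Bool)
    (h₁ : v₁.length = n) (h₂ : v₂.length = n) (hm : mOnes v₁ ≤ mOnes v₂)
    (x₁ x₂ : ℕ) (hx₁ : 0 < x₁) (hx₂ : 0 < x₂)
    (hp₁ : parityVec x₁ n = v₁) (hp₂ : parityVec x₂ n = v₂) :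
    (2 : ℤ) ^ n ∣
      (3 : ℤ) ^ (mOnes v₂ - mOnes v₁) * x₂ * Pchar v₁ - (x₁ : ℤ) * Pchar v₂ :=
  stmt_11_general n v₁ v₂ hm x₁ x₂ hp₁ hp₂
end

section
/- Let V = (e_1, e_2, …) be an infinite binary sequence containing infinitely many entries equal to 1. For j ≥ 1 let m_j(V) and P_j(V) denote m(R_j(V)) and P(R_j(V)) for the truncation R_j(V) = (e_1, …, e_j). Then the real sequence P_j(V) / (2^j · 3^{m_j(V)}) tends to 0 as j → ∞. (Paper's Corollary 5.6.) -/
open Filter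

lemma mOnes_cons (e : Bool) (v : List Bool) :
    mOnes (e :: v) = (if e then 1 else 0) + mOnes v := by
  cases e <;> simp [mOnes, add_comm]

lemma mOnes_le_length (v : List Bool) : mOnes v ≤ v.length :=
  List.count_le_length

theorem two_pow_mOnes_mul_Pchar_le (v : List Bool) :
    2 ^ mOnes v * Pchar v ≤ 2 ^ v.length * 3 ^ mOnes v := by
  induction v with
  | nil => simp [Pchar]
  | cons e v ih =>
    have h2 : 2 ^ mOnes v ≤ 2 ^ v.length := Nat.pow_le_pow_right two_pos (mOnes_le_length v)
    cases e
    · simp only [Pchar, mOnes_cons, List.length_cons, Bool.false_eq_true, if_false, zero_add]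
      calc 2 ^ mOnes v * (2 * Pchar v) = 2 * (2 ^ mOnes v * Pchar v) := by ring
        _ ≤ 2 * (2 ^ v.length * 3 ^ mOnes v) := by gcongr
        _ = 2 ^ (v.length + 1) * 3 ^ mOnes v := by ring
    · simp only [Pchar, mOnes_cons, List.length_cons, if_true]
      calc 2 ^ (1 + mOnes v) * (3 ^ mOnes v + 2 * Pchar v)
          = 2 * (2 ^ mOnes v * 3 ^ mOnes v) + 4 * (2 ^ mOnes v * Pchar v) := by ring
        _ ≤ 2 * (2 ^ v.length * 3 ^ mOnes v) + 4 * (2 ^ v.length * 3 ^ mOnes v) := by gcongr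
        _ = 2 ^ (v.length + 1) * 3 ^ (1 + mOnes v) := by ring

theorem Pchar_div_le (v : List Bool) :
    (Pchar v : ℝ) / (2 ^ v.length * 3 ^ mOnes v) ≤ (1 / 2) ^ mOnes v := by
  rw [div_le_iff₀ (by positivity), one_div, inv_pow, inv_mul_eq_div, le_div_iff₀ (by positivity),
    mul_comm]
  exact_mod_cast two_pow_mOnes_mul_Pchar_le v

lemma mOnes_map_range (V : ℕ → Bool) (j : ℕ) :
    mOnes ((List.range j).map V) = Nat.count (fun i => V i = true) j := by
  induction j with
  | zero => rfl
  | succ j ih =>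
    rw [List.range_succ, List.map_append, Nat.count_succ, ← ih]
    cases h : V j <;> simp [mOnes, h]

theorem Nat.tendsto_count_atTop {p : ℕ → Prop} [DecidablePred p] (hp : {n | p n}.Infinite) :
    Tendsto (Nat.count p) atTop atTop :=
  Nat.count_monotone p |>.tendsto_atTop_atTop fun n =>
    ⟨Nat.nth p n, (Nat.count_nth_of_infinite hp n).ge⟩

/-- Paper's Corollary 5.6: for an infinite binary sequence with infinitely many
ones, `P_j(V) / (2^j * 3^(m_j(V))) → 0` as j → ∞. -/
theorem stmt_16 (V : ℕ → Bool) (hinf : {i : ℕ | V i = true}.Infinite) :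
    Filter.Tendsto
      (fun j => (Pchar ((List.range j).map V) : ℝ) /
        (2 ^ j * 3 ^ mOnes ((List.range j).map V)))
      Filter.atTop (nhds 0) := by
  have hm : Tendsto (fun j => mOnes ((List.range j).map V)) atTop atTop := by
    simpa only [mOnes_map_range] using Nat.tendsto_count_atTop hinf
  refine squeeze_zero (fun j => by positivity) (fun j => ?_)
    ((tendsto_pow_atTop_nhds_zero_of_lt_one (r := (1 / 2 : ℝ)) (by norm_num) (by norm_num)).comp hm)
  simpa using Pchar_div_le ((List.range j).map V)
end
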